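/- arXiv:2601.17311 — 3 statements merged into one kernel-verified Lean document; each statement's English description precedes it below -/
import Mathlib

section
/- For an odd integer b = 2k+1 with k ≥ 1, the majority map f_b is differentiable on (-1,1) with f_b'(u) = ((2k+1) · C(2k, k) / 4^k) · (1-u^2)^k for all u ∈ (-1,1); in particular f_b'(0) = b · C(b-1, (b-1)/2) / 2^{b-1}, the derivative f_b' is strictly decreasing on (0,1), and f_b is concave on [0,1] (strictly concave on (0,1)). -/
/-!
The binomial tail `F` is a sum of Bernstein polynomials, whose derivatives telescope:
`F' = (2k+1) C(2k,k) p^k (1-p)^k`. Substituting `p = (1+u)/2` turns this into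
`C (1-u²)^k / 4^k`, which is positive and strictly decreasing on `[0,1]`, so `f_b` is strictly
concave there.
-/

open Finset

/-- The upper binomial tail `F(p) = ∑_{j=k+1}^{2k+1} C(2k+1,j) p^j (1-p)^{2k+1-j}`. -/
noncomputable def majF (k : ℕ) (p : ℝ) : ℝ :=
  ∑ j ∈ Finset.Icc (k + 1) (2 * k + 1),
    (Nat.choose (2 * k + 1) j : ℝ) * p ^ j * (1 - p) ^ (2 * k + 1 - j)

/-- The majority map `f_b(u) = 2 F((1+u)/2) - 1` for odd fan-in `b = 2k+1`. -/
noncomputable def majMap (k : ℕ) (u : ℝ) : ℝ :=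
  2 * majF k ((1 + u) / 2) - 1

/-- The closed-form derivative of the majority map:
`f_b'(u) = ((2k+1) C(2k,k) / 4^k) (1-u²)^k`. -/
noncomputable def majMapDeriv (k : ℕ) (u : ℝ) : ℝ :=
  ((2 * k + 1 : ℝ) * (Nat.choose (2 * k) k : ℝ) / 4 ^ k) * (1 - u ^ 2) ^ k

open Polynomial

theorem derivative_sum_bernsteinPolynomial_Icc {R : Type*} [CommRing R] {n ν : ℕ}
    (h : ν ≤ n + 1) :
    derivative (∑ j ∈ Icc (ν + 1) (n + 1), bernsteinPolynomial R (n + 1) j) =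
      (n + 1 : R[X]) * bernsteinPolynomial R n ν := by
  have hdiff (i : ℕ) : derivative (bernsteinPolynomial R (n + 1) (i + 1)) =
      (n + 1 : R[X]) * -(bernsteinPolynomial R n (i + 1) - bernsteinPolynomial R n i) := by
    rw [bernsteinPolynomial.derivative_succ, neg_sub]; push_cast; simp
  rw [← Ico_add_one_right_eq_Icc, ← sum_Ico_add', derivative_sum]
  simp_rw [hdiff, ← mul_sum, sum_neg_distrib,
    sum_Ico_sub (fun i => bernsteinPolynomial R n i) h,
    bernsteinPolynomial.eq_zero_of_lt R (Nat.lt_succ_self n)]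
  ring

theorem majF_eq_eval (k : ℕ) :
    majF k = fun p =>
      (∑ j ∈ Icc (k + 1) (2 * k + 1), bernsteinPolynomial ℝ (2 * k + 1) j).eval p := by
  ext p
  simp [majF, eval_finsetSum, bernsteinPolynomial]

theorem hasDerivAt_majF (k : ℕ) (p : ℝ) :
    HasDerivAt (majF k) ((2 * k + 1) * (Nat.choose (2 * k) k * p ^ k * (1 - p) ^ k)) p := by
  have h := Polynomial.hasDerivAt
    (∑ j ∈ Icc (k + 1) (2 * k + 1), bernsteinPolynomial ℝ (2 * k + 1) j) p
  rw [derivative_sum_bernsteinPolynomial_Icc (by omega)] at h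
  rw [majF_eq_eval]
  refine h.congr_deriv ?_
  simp [bernsteinPolynomial, two_mul]

theorem hasDerivAt_majMap (k : ℕ) (u : ℝ) : HasDerivAt (majMap k) (majMapDeriv k u) u := by
  have hp : HasDerivAt (fun u : ℝ => (1 + u) / 2) (1 / 2) u :=
    ((hasDerivAt_id u).const_add 1).div_const 2
  refine (((hasDerivAt_majF k _).comp u hp).const_mul 2 |>.sub_const 1).congr_deriv ?_
  have hprod : ((1 + u) / 2) ^ k * (1 - (1 + u) / 2) ^ k = (1 - u ^ 2) ^ k / 4 ^ k := by
    rw [← mul_pow, ← div_pow]; congr 1; ring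
  rw [majMapDeriv]
  linear_combination ((2 * k + 1 : ℝ) * (Nat.choose (2 * k) k : ℝ)) * hprod

theorem deriv_majMap (k : ℕ) : deriv (majMap k) = majMapDeriv k :=
  funext fun u => (hasDerivAt_majMap k u).deriv

theorem strictAntiOn_one_sub_sq_pow {k : ℕ} (hk : k ≠ 0) :
    StrictAntiOn (fun u : ℝ => (1 - u ^ 2) ^ k) (Set.Icc 0 1) := by
  intro x hx y hy hxy
  apply pow_lt_pow_left₀ _ _ hk
  · nlinarith [hx.1]
  · nlinarith [hy.1, hy.2]

theorem strictAntiOn_majMapDeriv {k : ℕ} (hk : k ≠ 0) :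
    StrictAntiOn (majMapDeriv k) (Set.Icc 0 1) := fun x hx y hy hxy =>
  mul_lt_mul_of_pos_left (strictAntiOn_one_sub_sq_pow hk hx hy hxy)
    (by have := Nat.choose_pos (Nat.le_mul_of_pos_left k two_pos); positivity)

theorem strictConcaveOn_majMap {k : ℕ} (hk : k ≠ 0) :
    StrictConcaveOn ℝ (Set.Icc 0 1) (majMap k) := by
  refine StrictAntiOn.strictConcaveOn_of_deriv (convex_Icc 0 1)
    (fun u _ => (hasDerivAt_majMap k u).continuousAt.continuousWithinAt) ?_
  rw [interior_Icc, deriv_majMap]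
  exact (strictAntiOn_majMapDeriv hk).mono Set.Ioo_subset_Icc_self

/-- The majority map is differentiable on `(-1,1)` with the stated closed-form
derivative; at the origin the derivative is `b C(b-1,(b-1)/2)/2^{b-1}` with `b = 2k+1`;
the derivative is strictly decreasing on `(0,1)`; and `f_b` is concave on `[0,1]`
(strictly concave on `(0,1)`). -/
theorem majMap_deriv_concave (k : ℕ) (hk : 1 ≤ k) :
    (∀ u ∈ Set.Ioo (-1 : ℝ) 1, HasDerivAt (majMap k) (majMapDeriv k u) u) ∧
    majMapDeriv k 0 =
      ((2 * k + 1 : ℝ) * (Nat.choose (2 * k + 1 - 1) ((2 * k + 1 - 1) / 2) : ℝ)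
        / 2 ^ (2 * k + 1 - 1)) ∧
    StrictAntiOn (majMapDeriv k) (Set.Ioo (0 : ℝ) 1) ∧
    ConcaveOn ℝ (Set.Icc (0 : ℝ) 1) (majMap k) ∧
    StrictConcaveOn ℝ (Set.Ioo (0 : ℝ) 1) (majMap k) := by
  have hk₀ : k ≠ 0 := Nat.one_le_iff_ne_zero.mp hk
  refine ⟨fun u _ => hasDerivAt_majMap k u, ?_,
    (strictAntiOn_majMapDeriv hk₀).mono Set.Ioo_subset_Icc_self,
    (strictConcaveOn_majMap hk₀).concaveOn,
    (strictConcaveOn_majMap hk₀).subset Set.Ioo_subset_Icc_self (convex_Ioo 0 1)⟩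
  norm_num [majMapDeriv, pow_mul]
end

section
/- Fix an odd integer b = 2k+1 with k ≥ 1, ρ ∈ [0,1), and γ ∈ (0,1]. Define T(u) = ρ·γ·u + (1-ρ)·f_b(γ·u) for u ∈ [0,1], and α = γ·(ρ + (1-ρ)·f_b'(0)) where f_b'(0) = b·C(b-1,(b-1)/2)/2^{b-1}. If α > 1, then there exists a unique μ* ∈ (0,1] with T(μ*) = μ*; for every μ₀ ∈ (0,1], the iterated sequence μ_{t+1} = T(μ_t) converges to μ* as t → ∞; moreover μ* = 1 if γ = 1, and μ* < 1 if γ < 1. -/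
open Finset Filter

/-- The one-layer recursion map `T(u) = ρ γ u + (1-ρ) f_b(γ u)` for fan-in `b = 2k+1`. -/
noncomputable def Tmap (k : ℕ) (ρ γ u : ℝ) : ℝ :=
  ρ * γ * u + (1 - ρ) * majMap k (γ * u)

/-- The derivative of the majority map at the origin:
`f_b'(0) = b C(b-1,(b-1)/2)/2^{b-1} = (2k+1) C(2k,k)/2^{2k}`. -/
noncomputable def majPrimeZero (k : ℕ) : ℝ :=
  (2 * k + 1 : ℝ) * (Nat.choose (2 * k) k : ℝ) / 2 ^ (2 * k)

/-- The effective per-layer gain `α = γ (ρ + (1-ρ) f_b'(0))`. -/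
noncomputable def alphaGain (k : ℕ) (ρ γ : ℝ) : ℝ :=
  γ * (ρ + (1 - ρ) * majPrimeZero k)

/-!
The map `T` is a polynomial with `T 0 = 0` whose derivative is
`T' u = γ (ρ + (1 - ρ) f_b'(0) (1 - γ² u²)^k)`. On `[0,1]` this is nonnegative and strictly decreasing, so `T` is monotone and strictly
concave there. Concavity and `T 0 = 0` make the chord slope `T u / u` strictly decreasing; it
exceeds `1` near `0` because `T' 0 = α > 1`, and `T 1 ≤ 1`. Hence `T u = u` has exactly one root
`μ*` in `(0,1]`, with `T u > u` below it and `T u < u` above it, so every orbit is monotone and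
bounded, and its limit is a fixed point, hence `μ*`. Finally `T 1 = 1` exactly when `γ = 1`.
-/

open Polynomial Topology

section ConcaveSelfMap

variable {f : ℝ → ℝ}

theorem StrictConcaveOn.strictAntiOn_div_self {s : Set ℝ} (hf : StrictConcaveOn ℝ s f)
    (h0 : 0 ∈ s) (hf0 : f 0 = 0) : StrictAntiOn (fun x => f x / x) (s ∩ Set.Ioi 0) :=
  fun _ hx _ hy hxy => by
    simpa [hf0] using hf.secant_strict_mono h0 hx.1 hy.1 hx.2.ne' hy.2.ne' hxy

theorem le_map_of_le_fixedPt (hf : StrictConcaveOn ℝ (Set.Icc 0 1) f) (hf0 : f 0 = 0) {μ x : ℝ}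
    (hμ : μ ≤ 1) (hfμ : f μ = μ) (hx : 0 < x) (hxμ : x ≤ μ) : x ≤ f x := by
  have h := (hf.strictAntiOn_div_self (by simp) hf0).antitoneOn
    ⟨⟨hx.le, hxμ.trans hμ⟩, hx⟩ ⟨⟨(hx.trans_le hxμ).le, hμ⟩, hx.trans_le hxμ⟩ hxμ
  rw [hfμ, div_self (hx.trans_le hxμ).ne', le_div_iff₀ hx] at h
  linarith

theorem map_le_of_fixedPt_le (hf : StrictConcaveOn ℝ (Set.Icc 0 1) f) (hf0 : f 0 = 0) {μ x : ℝ}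
    (hμ : 0 < μ) (hfμ : f μ = μ) (hμx : μ ≤ x) (hx : x ≤ 1) : f x ≤ x := by
  have h := (hf.strictAntiOn_div_self (by simp) hf0).antitoneOn
    ⟨⟨hμ.le, hμx.trans hx⟩, hμ⟩ ⟨⟨(hμ.trans_le hμx).le, hx⟩, hμ.trans_le hμx⟩ hμx
  rw [hfμ, div_self hμ.ne', div_le_iff₀ (hμ.trans_le hμx)] at h
  linarith

theorem eq_of_isFixedPt_of_strictConcaveOn (hf : StrictConcaveOn ℝ (Set.Icc 0 1) f)
    (hf0 : f 0 = 0) {x y : ℝ} (hx : x ∈ Set.Ioc 0 1) (hy : y ∈ Set.Ioc 0 1) (hfx : f x = x)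
    (hfy : f y = y) : x = y :=
  (hf.strictAntiOn_div_self (by simp) hf0).injOn ⟨Set.Ioc_subset_Icc_self hx, hx.1⟩
    ⟨Set.Ioc_subset_Icc_self hy, hy.1⟩
    (by simp only [hfx, hfy, div_self hx.1.ne', div_self hy.1.ne'])

theorem tendsto_iterate_of_le_map (hf : Continuous f) {a b μ x : ℝ}
    (hmaps : Set.MapsTo f (Set.Icc a b) (Set.Icc a b)) (hle : ∀ y ∈ Set.Icc a b, y ≤ f y)
    (huniq : ∀ y ∈ Set.Icc a b, f y = y → y = μ) (hx : x ∈ Set.Icc a b) :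
    Tendsto (fun n => f^[n] x) atTop (𝓝 μ) := by
  have hmem n : f^[n] x ∈ Set.Icc a b := hmaps.iterate n hx
  have hmono : Monotone (fun n => f^[n] x) := monotone_nat_of_le_succ fun n => by
    simpa only [Function.iterate_succ_apply'] using hle _ (hmem n)
  have hlim := tendsto_atTop_ciSup hmono ⟨b, by rintro _ ⟨n, rfl⟩; exact (hmem n).2⟩
  have hL := isClosed_Icc.mem_of_tendsto hlim (Eventually.of_forall hmem)
  rwa [huniq _ hL (isFixedPt_of_tendsto_iterate hlim hf.continuousAt)] at hlim

theorem tendsto_iterate_of_map_le (hf : Continuous f) {a b μ x : ℝ}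
    (hmaps : Set.MapsTo f (Set.Icc a b) (Set.Icc a b)) (hle : ∀ y ∈ Set.Icc a b, f y ≤ y)
    (huniq : ∀ y ∈ Set.Icc a b, f y = y → y = μ) (hx : x ∈ Set.Icc a b) :
    Tendsto (fun n => f^[n] x) atTop (𝓝 μ) := by
  have hmem n : f^[n] x ∈ Set.Icc a b := hmaps.iterate n hx
  have hanti : Antitone (fun n => f^[n] x) := antitone_nat_of_succ_le fun n => by
    simpa only [Function.iterate_succ_apply'] using hle _ (hmem n)
  have hlim := tendsto_atTop_ciInf hanti ⟨a, by rintro _ ⟨n, rfl⟩; exact (hmem n).1⟩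
  have hL := isClosed_Icc.mem_of_tendsto hlim (Eventually.of_forall hmem)
  rwa [huniq _ hL (isFixedPt_of_tendsto_iterate hlim hf.continuousAt)] at hlim

theorem exists_lt_map_of_hasDerivAt_zero {f' : ℝ} (hf : HasDerivAt f f' 0) (hf0 : f 0 = 0)
    (hf' : 1 < f') : ∃ u ∈ Set.Ioo (0 : ℝ) 1, u < f u := by
  have hslope : ∀ᶠ t in 𝓝[>] (0 : ℝ), 1 < t⁻¹ • (f (0 + t) - f 0) :=
    hf.tendsto_slope_zero_right.eventually (lt_mem_nhds hf')
  obtain ⟨u, hu, hmem⟩ := (hslope.and (Ioo_mem_nhdsGT one_pos)).exists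
  refine ⟨u, hmem, ?_⟩
  rwa [zero_add, hf0, sub_zero, smul_eq_mul, ← div_eq_inv_mul, one_lt_div hmem.1] at hu

theorem exists_fixedPt_tendsto_iterate_of_strictConcaveOn (hcont : Continuous f)
    (hmono : MonotoneOn f (Set.Icc 0 1)) (hconc : StrictConcaveOn ℝ (Set.Icc 0 1) f)
    (hf0 : f 0 = 0) (hf1 : f 1 ≤ 1) {u : ℝ} (hu : u ∈ Set.Ioo 0 1) (hfu : u < f u) :
    ∃ μ ∈ Set.Ioc (0 : ℝ) 1, f μ = μ ∧ (∀ y ∈ Set.Ioc (0 : ℝ) 1, f y = y → y = μ) ∧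
      ∀ x ∈ Set.Ioc (0 : ℝ) 1, Tendsto (fun n => f^[n] x) atTop (𝓝 μ) := by
  obtain ⟨μ, hμ, hfμ⟩ : ∃ μ ∈ Set.Icc u 1, f μ - μ = 0 :=
    intermediate_value_Icc' hu.2.le (by fun_prop : Continuous fun x => f x - x).continuousOn
      ⟨by linarith, by linarith⟩
  have hμ' : μ ∈ Set.Ioc (0 : ℝ) 1 := ⟨hu.1.trans_le hμ.1, hμ.2⟩
  replace hfμ : f μ = μ := sub_eq_zero.mp hfμ
  have huniq y (hy : y ∈ Set.Ioc (0 : ℝ) 1) (hfy : f y = y) : y = μ :=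
    eq_of_isFixedPt_of_strictConcaveOn hconc hf0 hy hμ' hfy hfμ
  refine ⟨μ, hμ', hfμ, huniq, fun x hx => ?_⟩
  rcases le_total x μ with hxμ | hμx
  · have hle : ∀ y ∈ Set.Icc x μ, y ≤ f y := fun y hy =>
      le_map_of_le_fixedPt hconc hf0 hμ'.2 hfμ (hx.1.trans_le hy.1) hy.2
    refine tendsto_iterate_of_le_map hcont (fun y hy => ⟨hy.1.trans (hle y hy), ?_⟩) hle
      (fun y hy => huniq y ⟨hx.1.trans_le hy.1, hy.2.trans hμ'.2⟩) ⟨le_rfl, hxμ⟩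
    exact hfμ ▸ hmono ⟨hx.1.le.trans hy.1, hy.2.trans hμ'.2⟩ ⟨hμ'.1.le, hμ'.2⟩ hy.2
  · have hle : ∀ y ∈ Set.Icc μ 1, f y ≤ y := fun y hy =>
      map_le_of_fixedPt_le hconc hf0 hμ'.1 hfμ hy.1 hy.2
    refine tendsto_iterate_of_map_le hcont (fun y hy => ⟨?_, (hle y hy).trans hy.2⟩) hle
      (fun y hy => huniq y ⟨hμ'.1.trans_le hy.1, hy.2⟩) ⟨hμx, hx.2⟩
    exact hfμ ▸ hmono ⟨hμ'.1.le, hμ'.2⟩ ⟨hμ'.1.le.trans hy.1, hy.2⟩ hy.1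

end ConcaveSelfMap

theorem sum_range_add_sum_Icc_upper_half {M : Type*} [AddCommMonoid M] (k : ℕ) (g : ℕ → M) :
    ∑ j ∈ range (k + 1), g j + ∑ j ∈ Icc (k + 1) (2 * k + 1), g j =
      ∑ j ∈ range (2 * k + 1 + 1), g j := by
  rw [← Ico_add_one_right_eq_Icc]
  exact sum_range_add_sum_Ico g (by omega)

theorem sum_Icc_choose_upper_half (k : ℕ) :
    ∑ j ∈ Icc (k + 1) (2 * k + 1), (2 * k + 1).choose j = 4 ^ k := by
  have h := sum_range_add_sum_Icc_upper_half k (2 * k + 1).choose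
  rw [Nat.sum_range_choose_halfway, Nat.sum_range_choose] at h
  have h2 : 2 ^ (2 * k + 1) = 2 * 4 ^ k := by rw [pow_succ, pow_mul]; norm_num; ring
  omega

-- In Bernstein form the derivative telescopes, by `bernsteinPolynomial.derivative_succ`.
noncomputable def majPoly (k : ℕ) : ℝ[X] :=
  ∑ j ∈ Icc (k + 1) (2 * k + 1), bernsteinPolynomial ℝ (2 * k + 1) j

theorem majF_eq_eval_s9 (k : ℕ) (p : ℝ) : majF k p = (majPoly k).eval p := by
  simp [majF, majPoly, eval_finsetSum, bernsteinPolynomial]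

theorem derivative_majPoly (k : ℕ) :
    derivative (majPoly k) = (2 * k + 1 : ℝ[X]) * bernsteinPolynomial ℝ (2 * k) k := by
  have hsucc (i : ℕ) : k + 1 + i = k + i + 1 := by omega
  rw [majPoly, ← Ico_add_one_right_eq_Icc, sum_Ico_eq_sum_range, derivative_sum]
  simp_rw [hsucc, bernsteinPolynomial.derivative_succ, ← mul_sum]
  rw [show 2 * k + 1 + 1 - (k + 1) = k + 1 by omega, show 2 * k + 1 - 1 = 2 * k by omega]
  have htel : ∑ i ∈ range (k + 1), (bernsteinPolynomial ℝ (2 * k) (k + i) -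
      bernsteinPolynomial ℝ (2 * k) (k + i + 1)) = bernsteinPolynomial ℝ (2 * k) k :=
    (sum_range_sub' (fun i => bernsteinPolynomial ℝ (2 * k) (k + i)) (k + 1)).trans <| by
      rw [bernsteinPolynomial.eq_zero_of_lt ℝ (show 2 * k < k + (k + 1) by omega), add_zero,
        sub_zero]
  rw [htel]
  push_cast
  rfl

theorem eval_bernsteinPolynomial_nonneg (n ν : ℕ) {p : ℝ} (hp : p ∈ Set.Icc 0 1) :
    0 ≤ (bernsteinPolynomial ℝ n ν).eval p := by
  have : 0 ≤ 1 - p := sub_nonneg.mpr hp.2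
  simp only [bernsteinPolynomial, eval_mul, eval_pow, eval_sub, eval_one, eval_X, eval_natCast]
  exact mul_nonneg (mul_nonneg (Nat.cast_nonneg _) (pow_nonneg hp.1 _)) (pow_nonneg this _)

theorem sum_range_eval_bernsteinPolynomial_add_majF (k : ℕ) (p : ℝ) :
    ∑ j ∈ range (k + 1), (bernsteinPolynomial ℝ (2 * k + 1) j).eval p + majF k p = 1 := by
  rw [majF_eq_eval_s9, majPoly, eval_finsetSum, sum_range_add_sum_Icc_upper_half, ← eval_finsetSum,
    bernsteinPolynomial.sum, eval_one]

theorem majF_lt_one (k : ℕ) {p : ℝ} (hp : p ∈ Set.Ico 0 1) : majF k p < 1 := by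
  have hp' : p ∈ Set.Icc 0 1 := Set.Ico_subset_Icc_self hp
  have hlower : 0 < ∑ j ∈ range (k + 1), (bernsteinPolynomial ℝ (2 * k + 1) j).eval p := by
    refine lt_of_lt_of_le ?_ (single_le_sum (fun j _ => eval_bernsteinPolynomial_nonneg _ j hp')
      (mem_range.mpr k.succ_pos))
    simpa [bernsteinPolynomial] using pow_pos (sub_pos.mpr hp.2) (2 * k + 1)
  linarith [sum_range_eval_bernsteinPolynomial_add_majF k p]

theorem majF_one (k : ℕ) : majF k 1 = 1 := by
  simp only [majF_eq_eval_s9, majPoly, eval_finsetSum, bernsteinPolynomial.eval_at_1, sum_ite_eq',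
    mem_Icc]
  exact if_pos ⟨by omega, le_rfl⟩

theorem majF_half (k : ℕ) : majF k (1 / 2) = 1 / 2 := by
  have hterm (j : ℕ) (hj : j ∈ Icc (k + 1) (2 * k + 1)) :
      ((2 * k + 1).choose j : ℝ) * (1 / 2) ^ j * (1 - 1 / 2) ^ (2 * k + 1 - j) =
        (2 * k + 1).choose j * (1 / 2) ^ (2 * k + 1) := by
    rw [mul_assoc, show (1 : ℝ) - 1 / 2 = 1 / 2 by norm_num, ← pow_add,
      Nat.add_sub_cancel' (mem_Icc.mp hj).2]
  rw [majF, sum_congr rfl hterm, ← sum_mul, ← Nat.cast_sum, sum_Icc_choose_upper_half,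
    pow_succ, pow_mul]
  push_cast
  rw [← mul_assoc, ← mul_pow]
  norm_num

theorem majPrimeZero_pos (k : ℕ) : 0 < majPrimeZero k := by
  unfold majPrimeZero
  have := Nat.choose_pos (show k ≤ 2 * k by omega)
  positivity

theorem hasDerivAt_majMap_s9 (k : ℕ) (u : ℝ) :
    HasDerivAt (majMap k) (majPrimeZero k * (1 - u ^ 2) ^ k) u := by
  have hin : HasDerivAt (fun u : ℝ => (1 + u) / 2) (1 / 2) u :=
    ((hasDerivAt_id u).const_add 1).div_const 2
  have h := ((((majPoly k).hasDerivAt _).comp u hin).const_mul 2).sub_const 1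
  have hmaj : (fun v => 2 * (majPoly k).eval ((1 + v) / 2) - 1) = majMap k := by
    ext v
    simp [majMap, majF_eq_eval_s9]
  rw [← hmaj]
  refine h.congr_deriv ?_
  rw [derivative_majPoly]
  simp only [bernsteinPolynomial, eval_mul, eval_pow, eval_sub, eval_one, eval_X, eval_natCast,
    eval_add, eval_ofNat, majPrimeZero, show 2 * k - k = k by omega]
  rw [pow_mul]
  field_simp
  rw [mul_assoc, mul_assoc, ← mul_pow, ← mul_pow]
  ring

theorem hasDerivAt_Tmap (k : ℕ) (ρ γ x : ℝ) :
    HasDerivAt (Tmap k ρ γ) (γ * (ρ + (1 - ρ) * (majPrimeZero k * (1 - (γ * x) ^ 2) ^ k))) x := by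
  have hlin : HasDerivAt (fun x => γ * x) γ x := by simpa using (hasDerivAt_id x).const_mul γ
  rw [show Tmap k ρ γ = fun y => ρ * (γ * y) + (1 - ρ) * majMap k (γ * y) from
    funext fun y => by rw [Tmap, mul_assoc]]
  exact ((hlin.const_mul ρ).add (((hasDerivAt_majMap_s9 k (γ * x)).comp x hlin).const_mul
    (1 - ρ))).congr_deriv (by ring)

theorem continuous_Tmap (k : ℕ) (ρ γ : ℝ) : Continuous (Tmap k ρ γ) :=
  continuous_iff_continuousAt.mpr fun x => (hasDerivAt_Tmap k ρ γ x).continuousAt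

theorem Tmap_zero (k : ℕ) (ρ γ : ℝ) : Tmap k ρ γ 0 = 0 := by
  rw [Tmap, majMap, mul_zero, mul_zero, add_zero, majF_half]
  ring

theorem Tmap_one_one (k : ℕ) (ρ : ℝ) : Tmap k ρ 1 1 = 1 := by
  norm_num [Tmap, majMap, majF_one]

theorem Tmap_one_lt_one (k : ℕ) {ρ γ : ℝ} (hρ : ρ ∈ Set.Icc 0 1) (hγ : γ ∈ Set.Ico (-1) 1) :
    Tmap k ρ γ 1 < 1 := by
  have hmaj : majF k ((1 + γ) / 2) < 1 := majF_lt_one k ⟨by linarith [hγ.1], by linarith [hγ.2]⟩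
  simp only [Tmap, majMap, mul_one]
  rcases hρ.1.eq_or_lt with rfl | hρ0
  · linarith
  · nlinarith [mul_pos hρ0 (sub_pos.mpr hγ.2),
      mul_nonneg (sub_nonneg.mpr hρ.2) (sub_nonneg.mpr hmaj.le)]

theorem monotoneOn_Tmap (k : ℕ) {ρ γ : ℝ} (hρ : ρ ∈ Set.Icc 0 1) (hγ : γ ∈ Set.Icc 0 1) :
    MonotoneOn (Tmap k ρ γ) (Set.Icc 0 1) := by
  refine monotoneOn_of_deriv_nonneg (convex_Icc 0 1) (continuous_Tmap k ρ γ).continuousOn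
    (fun x _ => (hasDerivAt_Tmap k ρ γ x).differentiableAt.differentiableWithinAt) ?_
  intro x hx
  rw [interior_Icc] at hx
  have hγx : (γ * x) ^ 2 ≤ 1 :=
    pow_le_one₀ (mul_nonneg hγ.1 hx.1.le) (mul_le_one₀ hγ.2 hx.1.le hx.2.le)
  rw [(hasDerivAt_Tmap k ρ γ x).deriv]
  exact mul_nonneg hγ.1 (add_nonneg hρ.1 (mul_nonneg (sub_nonneg.mpr hρ.2)
    (mul_nonneg (majPrimeZero_pos k).le (pow_nonneg (sub_nonneg.mpr hγx) k))))

theorem strictConcaveOn_Tmap {k : ℕ} (hk : k ≠ 0) {ρ γ : ℝ} (hρ : ρ < 1)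
    (hγ : γ ∈ Set.Ioc 0 1) : StrictConcaveOn ℝ (Set.Icc 0 1) (Tmap k ρ γ) := by
  refine StrictAntiOn.strictConcaveOn_of_deriv (convex_Icc 0 1)
    (continuous_Tmap k ρ γ).continuousOn fun x hx y hy hxy => ?_
  rw [interior_Icc] at hx hy
  rw [(hasDerivAt_Tmap k ρ γ x).deriv, (hasDerivAt_Tmap k ρ γ y).deriv]
  have hsq : (γ * x) ^ 2 < (γ * y) ^ 2 := by
    gcongr
    · exact (mul_pos hγ.1 hx.1).le
    · exact hγ.1
  have hy1 : (γ * y) ^ 2 ≤ 1 :=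
    pow_le_one₀ (mul_nonneg hγ.1.le hy.1.le) (mul_le_one₀ hγ.2 hy.1.le hy.2.le)
  have hpow : (1 - (γ * y) ^ 2) ^ k < (1 - (γ * x) ^ 2) ^ k :=
    pow_lt_pow_left₀ (by linarith) (by linarith) hk
  have hc : 0 < γ * ((1 - ρ) * majPrimeZero k) :=
    mul_pos hγ.1 (mul_pos (sub_pos.mpr hρ) (majPrimeZero_pos k))
  nlinarith

/-- Supercritical amplification and saturation: if `α > 1`, there is a unique fixed
point `μ* ∈ (0,1]` of `T`, all iterates from `μ₀ ∈ (0,1]` converge to it, and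
`μ* = 1` iff the channel is lossless (`γ = 1`), while `μ* < 1` when `γ < 1`. -/
theorem supercritical_amplification (k : ℕ) (hk : 1 ≤ k) (ρ γ : ℝ)
    (hρ : ρ ∈ Set.Ico (0 : ℝ) 1) (hγ : γ ∈ Set.Ioc (0 : ℝ) 1)
    (hα : 1 < alphaGain k ρ γ) :
    ∃ μstar : ℝ, μstar ∈ Set.Ioc (0 : ℝ) 1 ∧ Tmap k ρ γ μstar = μstar ∧
      (∀ y ∈ Set.Ioc (0 : ℝ) 1, Tmap k ρ γ y = y → y = μstar) ∧
      (∀ μ₀ ∈ Set.Ioc (0 : ℝ) 1, ∀ seq : ℕ → ℝ,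
        seq 0 = μ₀ → (∀ t, seq (t + 1) = Tmap k ρ γ (seq t)) →
        Filter.Tendsto seq Filter.atTop (nhds μstar)) ∧
      (γ = 1 → μstar = 1) ∧ (γ < 1 → μstar < 1) := by
  have hT1 : γ = 1 → Tmap k ρ γ 1 = 1 := by
    rintro rfl
    exact Tmap_one_one k ρ
  have hT1' : γ < 1 → Tmap k ρ γ 1 < 1 := fun h =>
    Tmap_one_lt_one k (Set.Ico_subset_Icc_self hρ) ⟨by linarith [hγ.1], h⟩
  obtain ⟨u, hu, hTu⟩ := exists_lt_map_of_hasDerivAt_zero (hasDerivAt_Tmap k ρ γ 0)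
    (Tmap_zero k ρ γ) (by simpa [alphaGain] using hα)
  obtain ⟨μ, hμ, hTμ, huniq, hconv⟩ := exists_fixedPt_tendsto_iterate_of_strictConcaveOn
    (continuous_Tmap k ρ γ) (monotoneOn_Tmap k (Set.Ico_subset_Icc_self hρ)
      (Set.Ioc_subset_Icc_self hγ)) (strictConcaveOn_Tmap (by omega) hρ.2 hγ)
    (Tmap_zero k ρ γ) (hγ.2.eq_or_lt.elim (fun h => (hT1 h).le) fun h => (hT1' h).le) hu hTu
  refine ⟨μ, hμ, hTμ, huniq, fun μ₀ hμ₀ seq hseq0 hseq => ?_,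
    fun h => (huniq 1 ⟨one_pos, le_rfl⟩ (hT1 h)).symm, fun h => hμ.2.lt_of_ne ?_⟩
  · have hiter : seq = fun n => (Tmap k ρ γ)^[n] μ₀ := funext fun n => by
      induction n with
      | zero => exact hseq0
      | succ n ih => rw [hseq, ih, Function.iterate_succ_apply']
    exact hiter ▸ hconv μ₀ hμ₀
  · rintro rfl
    exact (hT1' h).ne hTμ
end

section
/- Let (Ω, 𝒫) be a probability space carrying random variables Y (values in a measurable space 𝒴), X (values in a measurable space 𝒳), and U (values in a measurable space 𝒰), with U independent of the pair (X, Y). Let g : 𝒳 × 𝒰 → 𝒵 be measurable and set Z = g(X, U). Let ℓ : 𝒴' × 𝒴 → [0, ∞) be a bounded measurable loss, where predictions take values in a measurable space 𝒴'. Then for every measurable φ : 𝒵 → 𝒴', E[ℓ(φ(Z), Y)] ≥ inf over measurable ψ : 𝒳 → 𝒴' of E[ℓ(ψ(X), Y)]. -/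
/-!
Condition on the protocol randomness: by independence the law of `(U, (X, Y))` is the product
of the laws of `U` and of `(X, Y)`, so Fubini writes the risk of `φ ∘ g` as an average over `u`
of the risks of the rules `x ↦ φ (g (x, u))`. Each of these sees `X` alone, so its risk is at
least the infimum, and hence so is the average.
-/

open MeasureTheory ProbabilityTheory

namespace ProbabilityTheory.IndepFun

variable {Ω α β : Type*} [MeasurableSpace Ω] [MeasurableSpace α] [MeasurableSpace β]
  {μ : Measure Ω} {U : Ω → α} {W : Ω → β} {F : α × β → ℝ}

theorem integral_comp_eq_integral_integral [IsFiniteMeasure μ] (hUW : IndepFun U W μ)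
    (hU : Measurable U) (hW : Measurable W) (hF : Integrable F ((μ.map U).prod (μ.map W))) :
    ∫ ω, F (U ω, W ω) ∂μ = ∫ u, ∫ w, F (u, w) ∂(μ.map W) ∂(μ.map U) := by
  have hlaw := hUW.map_prod_eq_prod_map_map hU.aemeasurable hW.aemeasurable
  rw [← integral_prod F hF, ← hlaw,
    integral_map (hU.prodMk hW).aemeasurable (hlaw ▸ hF.aestronglyMeasurable)]

theorem le_integral_comp_of_forall_le [IsProbabilityMeasure μ] (hUW : IndepFun U W μ)
    (hU : Measurable U) (hW : Measurable W) (hFm : Measurable F)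
    (hF : Integrable F ((μ.map U).prod (μ.map W))) {c : ℝ}
    (hc : ∀ u, c ≤ ∫ ω, F (u, W ω) ∂μ) :
    c ≤ ∫ ω, F (U ω, W ω) ∂μ := by
  have : IsProbabilityMeasure (μ.map U) := Measure.isProbabilityMeasure_map hU.aemeasurable
  have hslice (u : α) : ∫ w, F (u, w) ∂(μ.map W) = ∫ ω, F (u, W ω) ∂μ :=
    integral_map hW.aemeasurable (hFm.comp measurable_prodMk_left).aestronglyMeasurable
  rw [hUW.integral_comp_eq_integral_integral hU hW hF]
  calc c = ∫ _, c ∂(μ.map U) := by simp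
    _ ≤ ∫ u, ∫ w, F (u, w) ∂(μ.map W) ∂(μ.map U) :=
      integral_mono (integrable_const c) hF.integral_prod_left fun u => (hslice u).symm ▸ hc u

end ProbabilityTheory.IndepFun

/-- Centralization dominates under unlimited context: if the root only observes
`Z = g(X, U)` where `U` is protocol randomness independent of `(X, Y)`, then the risk
of any decision rule `φ(Z)` is at least the infimum of the risks of decision rules
`ψ(X)` that see all leaf messages `X` directly. -/
theorem centralization_dominates
    {Ω 𝒴 𝒳 𝒰 𝒵 𝒴' : Type*}
    [MeasurableSpace Ω] [MeasurableSpace 𝒴] [MeasurableSpace 𝒳]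
    [MeasurableSpace 𝒰] [MeasurableSpace 𝒵] [MeasurableSpace 𝒴']
    (μ : Measure Ω) [IsProbabilityMeasure μ]
    (Y : Ω → 𝒴) (X : Ω → 𝒳) (U : Ω → 𝒰)
    (hY : Measurable Y) (hX : Measurable X) (hU : Measurable U)
    (hindep : IndepFun U (fun ω => (X ω, Y ω)) μ)
    (g : 𝒳 × 𝒰 → 𝒵) (hg : Measurable g)
    (ℓ : 𝒴' × 𝒴 → ℝ) (hℓmeas : Measurable ℓ)
    (hℓnonneg : ∀ y' y, 0 ≤ ℓ (y', y))
    (Cb : ℝ) (hℓbdd : ∀ y' y, ℓ (y', y) ≤ Cb)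
    (φ : 𝒵 → 𝒴') (hφ : Measurable φ) :
    sInf {r : ℝ | ∃ ψ : 𝒳 → 𝒴', Measurable ψ ∧ r = ∫ ω, ℓ (ψ (X ω), Y ω) ∂μ}
      ≤ ∫ ω, ℓ (φ (g (X ω, U ω)), Y ω) ∂μ := by
  let F : 𝒰 × (𝒳 × 𝒴) → ℝ := fun p => ℓ (φ (g (p.2.1, p.1)), p.2.2)
  have hFm : Measurable F := by fun_prop
  have hF : Integrable F ((μ.map U).prod (μ.map fun ω => (X ω, Y ω))) :=
    Integrable.of_bound hFm.aestronglyMeasurable Cb <|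
      ae_of_all _ fun p => (Real.norm_of_nonneg (hℓnonneg _ _)).trans_le (hℓbdd _ _)
  have hbdd : BddBelow {r : ℝ | ∃ ψ : 𝒳 → 𝒴', Measurable ψ ∧ r = ∫ ω, ℓ (ψ (X ω), Y ω) ∂μ} :=
    ⟨0, by rintro _ ⟨ψ, -, rfl⟩; exact integral_nonneg fun ω => hℓnonneg _ _⟩
  exact hindep.le_integral_comp_of_forall_le (F := F) hU (hX.prodMk hY) hFm hF
    fun u => csInf_le hbdd ⟨fun x => φ (g (x, u)), by fun_prop, rfl⟩
end
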